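/- Let ℓ : ℝ^m × ℝ^m → ℝ be differentiable and convex in its first argument for each value of its second argument. Define F(W,V) = (1/n)·Σ_{i=1}^n ℓ(W(x_i + V f(x_i)); y_i) for W ∈ ℝ^{m×d}, V ∈ ℝ^{d×k}, and F_lin(U) = (1/n)·Σ_{i=1}^n ℓ(U x_i; y_i) for U ∈ ℝ^{m×d}. Then at any point (W,V) for which W has full row rank with minimal singular value s_min(W) > 0, and for any U ∈ ℝ^{m×d}: ‖∇F(W,V)‖ ≥ (F(W,V) − F_lin(U)) / √(2‖W‖_F² + ‖U‖_F²·(2 + ‖V‖²/s_min(W)²)), where ∇F(W,V) is the gradient of F with respect to the concatenated vector (vec(W), vec(V)), ‖·‖_F is the Frobenius norm, and ‖V‖ is the spectral norm. -/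

import Mathlib

open scoped RealInnerProductSpace
open Finset Matrix

noncomputable section

/-- Euclidean column vectors in `ℝ^d`. -/
abbrev Vec (d : ℕ) : Type := EuclideanSpace ℝ (Fin d)

/-- The concatenated parameter vector `(vec(W), vec(V))`. -/
abbrev ParamM (m d k : ℕ) : Type := EuclideanSpace ℝ ((Fin m × Fin d) ⊕ (Fin d × Fin k))

/-- Pack `(W, V)` into a single Euclidean vector. -/
def pairWVm {m d k : ℕ} (W : Matrix (Fin m) (Fin d) ℝ) (V : Matrix (Fin d) (Fin k) ℝ) :
    ParamM m d k :=
  (EuclideanSpace.equiv ((Fin m × Fin d) ⊕ (Fin d × Fin k)) ℝ).symm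
    (Sum.elim (fun p => W p.1 p.2) (fun p => V p.1 p.2))

/-- The vector-output residual-network objective
`F(W,V) = (1/n)·Σᵢ ℓ(W(xᵢ + V f(xᵢ)); yᵢ)`. -/
def netObjVec {m d k n : ℕ} (ℓ : Vec m → Vec m → ℝ) (f : Vec d → Vec k)
    (x : Fin n → Vec d) (y : Fin n → Vec m) (z : ParamM m d k) : ℝ :=
  (1 / (n : ℝ)) *
    ∑ i, ℓ ((EuclideanSpace.equiv (Fin m) ℝ).symm fun a =>
        ∑ j, z (Sum.inl (a, j)) * ((x i) j + ∑ l, z (Sum.inr (j, l)) * (f (x i)) l)) (y i)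

/-- The linear-predictor objective `F_lin(U) = (1/n)·Σᵢ ℓ(U xᵢ; yᵢ)`. -/
def linObjVec {m d n : ℕ} (ℓ : Vec m → Vec m → ℝ) (x : Fin n → Vec d) (y : Fin n → Vec m)
    (U : Matrix (Fin m) (Fin d) ℝ) : ℝ :=
  (1 / (n : ℝ)) *
    ∑ i, ℓ ((EuclideanSpace.equiv (Fin m) ℝ).symm (U.mulVec fun j => (x i) j)) (y i)

/-- Spectral norm of a matrix. -/
def matSpectralNorm {ι κ : Type} [Fintype ι] [Fintype κ] [DecidableEq κ] (V : Matrix ι κ ℝ) : ℝ :=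
  ‖LinearMap.toContinuousLinearMap (Matrix.toEuclideanLin V)‖

/-- Frobenius norm of a matrix. -/
def frobNorm {ι κ : Type} [Fintype ι] [Fintype κ] (A : Matrix ι κ ℝ) : ℝ :=
  Real.sqrt (∑ i, ∑ j, A i j ^ 2)

/-- Minimal eigenvalue via the Rayleigh quotient `λ_min(M) = min_{‖z‖=1} zᵀ M z`. -/
def lambdaMin {ι : Type} [Fintype ι] [DecidableEq ι] (M : Matrix ι ι ℝ) : ℝ :=
  ⨅ z : {z : EuclideanSpace ℝ ι // ‖z‖ = 1}, ⟪z.1, Matrix.toEuclideanLin M z.1⟫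

/-- The minimal singular value of `W`: `s_min(W) = √(λ_min(W Wᵀ))`. -/
def sMin {m d : ℕ} (W : Matrix (Fin m) (Fin d) ℝ) : ℝ :=
  Real.sqrt (lambdaMin (W * Wᵀ))

/-!
Put `B = Wᵀ (W Wᵀ)⁻¹ U V`, so that `W B = U V`, and move from `z = (W, V)` in the direction
`Δ = (W - U, B)`. The predictions `(W + t (W - U)) (xᵢ + (V + t B) f(xᵢ))` then have derivative
`W (xᵢ + V f(xᵢ)) - U xᵢ` at `t = 0`, so convexity of `ℓ` bounds `F(z) - F_lin(U)` by the
directional derivative `⟪∇F(z), Δ⟫ ≤ ‖∇F(z)‖ ‖Δ‖`. Finally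
`‖Δ‖² = ‖W - U‖_F² + ‖B‖_F² ≤ 2‖W‖_F² + 2‖U‖_F² + ‖U‖_F² ‖V‖² / s_min(W)²`, because
`‖Wᵀ (W Wᵀ)⁻¹ v‖ ≤ ‖v‖ / s_min(W)` and `‖U V‖_F ≤ ‖U‖_F ‖V‖`.
-/

theorem ConvexOn.sub_le_apply_sub_of_hasFDerivAt {E : Type*} [NormedAddCommGroup E]
    [NormedSpace ℝ E] {s : Set E} {g : E → ℝ} {g' : E →L[ℝ] ℝ} {p q : E}
    (hg : ConvexOn ℝ s g) (hp : p ∈ s) (hq : q ∈ s) (hg' : HasFDerivAt g g' p) :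
    g p - g q ≤ g' (p - q) := by
  set γ : ℝ →ᵃ[ℝ] E := AffineMap.lineMap p q
  have hφ : ConvexOn ℝ (γ ⁻¹' s) (g ∘ γ) := hg.comp_affineMap γ
  have h0 : γ 0 = p := AffineMap.lineMap_apply_zero p q
  have h1 : γ 1 = q := AffineMap.lineMap_apply_one p q
  have hφ' : HasDerivAt (g ∘ γ) (g' (q - p)) 0 :=
    (h0 ▸ hg').comp_hasDerivAt (0 : ℝ) AffineMap.hasDerivAt_lineMap
  have hslope := hφ.le_slope_of_hasDerivAt (x := 0) (y := 1) (by simpa [h0]) (by simpa [h1])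
    zero_lt_one hφ'
  simp only [slope_def_field, Function.comp_apply, h0, h1, sub_zero, div_one] at hslope
  rw [← neg_sub q p, map_neg]
  linarith

theorem le_norm_gradient_mul_norm_of_hasDerivAt {E : Type*} [NormedAddCommGroup E]
    [InnerProductSpace ℝ E] [CompleteSpace E] {F : E → ℝ} {z v : E} {D : ℝ}
    (hF : DifferentiableAt ℝ F z) (hD : HasDerivAt (fun t : ℝ => F (z + t • v)) D 0) :
    D ≤ ‖gradient F z‖ * ‖v‖ := by
  have hline : HasDerivAt (fun t : ℝ => z + t • v) v 0 := by
    simpa using ((hasDerivAt_id (0 : ℝ)).smul_const v).const_add z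
  have hF' : HasFDerivAt F (InnerProductSpace.toDual ℝ E (gradient F z)) (z + (0 : ℝ) • v) := by
    rw [zero_smul, add_zero]
    exact hF.hasGradientAt.hasFDerivAt
  rw [hD.unique (hF'.comp_hasDerivAt 0 hline), InnerProductSpace.toDual_apply_apply]
  exact real_inner_le_norm (gradient F z) v

section RayleighQuotient

variable {ι : Type} [Fintype ι] [DecidableEq ι]

open scoped Matrix.Norms.L2Operator

theorem lambdaMin_mul_norm_sq_le (M : Matrix ι ι ℝ) (z : EuclideanSpace ℝ ι) :
    lambdaMin M * ‖z‖ ^ 2 ≤ ⟪z, toEuclideanLin M z⟫ := by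
  rcases eq_or_ne z 0 with rfl | hz
  · simp
  have hbdd : BddBelow (Set.range fun u : {u : EuclideanSpace ℝ ι // ‖u‖ = 1} =>
      ⟪u.1, toEuclideanLin M u.1⟫) := by
    refine ⟨-‖M‖, ?_⟩
    rintro _ ⟨⟨u, hu⟩, rfl⟩
    have := (abs_real_inner_le_norm u (toEuclideanLin M u)).trans
      ((mul_le_mul_of_nonneg_left (M.l2_opNorm_mulVec u) (norm_nonneg u)))
    rw [hu, one_mul, mul_one] at this
    exact neg_le_of_abs_le this
  have hz0 : 0 < ‖z‖ := norm_pos_iff.2 hz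
  have hunit : ‖‖z‖⁻¹ • z‖ = 1 := by
    rw [norm_smul, norm_inv, norm_norm, inv_mul_cancel₀ hz0.ne']
  have hle := ciInf_le hbdd ⟨‖z‖⁻¹ • z, hunit⟩
  simp only [map_smul, inner_smul_left, inner_smul_right, RCLike.conj_to_real] at hle
  calc lambdaMin M * ‖z‖ ^ 2 ≤ ‖z‖⁻¹ * (‖z‖⁻¹ * ⟪z, toEuclideanLin M z⟫) * ‖z‖ ^ 2 :=
        mul_le_mul_of_nonneg_right hle (by positivity)
    _ = ⟪z, toEuclideanLin M z⟫ := by field_simp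

theorem isUnit_det_of_lambdaMin_pos {M : Matrix ι ι ℝ} (hM : 0 < lambdaMin M) :
    IsUnit M.det := by
  rw [isUnit_iff_ne_zero]
  intro hdet
  obtain ⟨v, hv, hMv⟩ := Matrix.exists_mulVec_eq_zero_iff.2 hdet
  have hray := lambdaMin_mul_norm_sq_le M (WithLp.toLp 2 v)
  have hzero : toEuclideanLin M (WithLp.toLp 2 v) = 0 := by simp [hMv]
  have hpos : 0 < ‖WithLp.toLp 2 v‖ := norm_pos_iff.2 (by simpa using hv)
  rw [hzero, inner_zero_right] at hray
  nlinarith [pow_pos hpos 2]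

end RayleighQuotient

section Matrices

variable {ι κ μ : Type} [Fintype ι] [Fintype κ] [Fintype μ]

open scoped Matrix.Norms.L2Operator

theorem inner_toEuclideanLin_mul_transpose_self [DecidableEq ι] [DecidableEq κ]
    (W : Matrix ι κ ℝ) (u : EuclideanSpace ℝ ι) :
    ⟪u, toEuclideanLin (W * Wᵀ) u⟫ = ‖toEuclideanLin Wᵀ u‖ ^ 2 := by
  rw [← real_inner_self_eq_norm_sq, toLpLin_apply, toLpLin_apply,
    EuclideanSpace.inner_eq_star_dotProduct, EuclideanSpace.inner_eq_star_dotProduct]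
  simp only [star_trivial, ← mulVec_mulVec, dotProduct_mulVec, vecMul_transpose]

theorem norm_sq_transpose_mul_inv_mulVec_le [DecidableEq ι] [DecidableEq κ] {W : Matrix ι κ ℝ}
    (hW : 0 < lambdaMin (W * Wᵀ)) (v : EuclideanSpace ℝ ι) :
    ‖(EuclideanSpace.equiv κ ℝ).symm ((Wᵀ * (W * Wᵀ)⁻¹) *ᵥ v)‖ ^ 2 ≤
      (lambdaMin (W * Wᵀ))⁻¹ * ‖v‖ ^ 2 := by
  -- With `u = (W Wᵀ)⁻¹ v`: `‖Wᵀ u‖² = ⟪u, v⟫ ≤ ‖u‖ ‖v‖` and `λ_min ‖u‖² ≤ ‖Wᵀ u‖²`.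
  set u : EuclideanSpace ℝ ι := toEuclideanLin (W * Wᵀ)⁻¹ v
  have hMu : toEuclideanLin (W * Wᵀ) u = v := by
    simp only [u, toLpLin_apply, mulVec_mulVec,
      mul_nonsing_inv _ (isUnit_det_of_lambdaMin_pos hW), one_mulVec, WithLp.toLp_ofLp]
  have hWu : (EuclideanSpace.equiv κ ℝ).symm ((Wᵀ * (W * Wᵀ)⁻¹) *ᵥ v) = toEuclideanLin Wᵀ u := by
    simp only [u, toLpLin_apply, mulVec_mulVec]
    rfl
  have hq := inner_toEuclideanLin_mul_transpose_self W u
  have hray := lambdaMin_mul_norm_sq_le (W * Wᵀ) u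
  rw [hq] at hray
  rw [hMu] at hq
  have hcs := real_inner_le_norm u v
  rw [hWu, le_inv_mul_iff₀ hW]
  set a := ‖toEuclideanLin Wᵀ u‖ ^ 2
  rcases (sq_nonneg _ : 0 ≤ a).eq_or_lt with ha | ha
  · rw [show a = 0 from ha.symm, mul_zero]
    positivity
  refine le_of_mul_le_mul_right ?_ ha
  calc lambdaMin (W * Wᵀ) * a * a ≤ lambdaMin (W * Wᵀ) * (‖u‖ * ‖v‖) ^ 2 := by
        rw [mul_assoc]
        exact mul_le_mul_of_nonneg_left (by nlinarith) hW.le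
    _ = lambdaMin (W * Wᵀ) * ‖u‖ ^ 2 * ‖v‖ ^ 2 := by ring
    _ ≤ ‖v‖ ^ 2 * a := by nlinarith

theorem frobNorm_sq (A : Matrix ι κ ℝ) : frobNorm A ^ 2 = ∑ i, ∑ j, A i j ^ 2 :=
  Real.sq_sqrt (by positivity)

theorem frobNorm_transpose (A : Matrix ι κ ℝ) : frobNorm Aᵀ = frobNorm A := by
  rw [frobNorm, frobNorm, Finset.sum_comm]
  rfl

theorem frobNorm_sub_sq_le (A B : Matrix ι κ ℝ) :
    frobNorm (A - B) ^ 2 ≤ 2 * frobNorm A ^ 2 + 2 * frobNorm B ^ 2 := by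
  simp only [frobNorm_sq, Finset.mul_sum, ← Finset.sum_add_distrib]
  gcongr with i _ j _
  rw [Matrix.sub_apply]
  nlinarith [sq_nonneg (A i j + B i j)]

theorem frobNorm_mul_sq_le_of_norm_mulVec_sq_le {A : Matrix ι κ ℝ} {c : ℝ}
    (hA : ∀ v : EuclideanSpace ℝ κ, ‖(EuclideanSpace.equiv ι ℝ).symm (A *ᵥ v)‖ ^ 2 ≤ c * ‖v‖ ^ 2)
    (B : Matrix κ μ ℝ) : frobNorm (A * B) ^ 2 ≤ c * frobNorm B ^ 2 := by
  have hcol : ∀ l, ∑ i, (A * B) i l ^ 2 ≤ c * ∑ j, B j l ^ 2 := fun l => by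
    simpa [EuclideanSpace.real_norm_sq_eq, mulVec, dotProduct, mul_apply] using
      hA (WithLp.toLp 2 fun j => B j l)
  rw [frobNorm_sq, frobNorm_sq, Finset.sum_comm, Finset.sum_comm (f := fun j l => B j l ^ 2),
    Finset.mul_sum]
  exact Finset.sum_le_sum fun l _ => hcol l

theorem frobNorm_mul_sq_le [DecidableEq κ] [DecidableEq μ] (U : Matrix ι κ ℝ)
    (V : Matrix κ μ ℝ) : frobNorm (U * V) ^ 2 ≤ matSpectralNorm V ^ 2 * frobNorm U ^ 2 := by
  rw [← frobNorm_transpose (U * V), transpose_mul, ← frobNorm_transpose U]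
  refine frobNorm_mul_sq_le_of_norm_mulVec_sq_le (fun v => ?_) Uᵀ
  have h := Vᵀ.l2_opNorm_mulVec v
  rw [← conjTranspose_eq_transpose_of_trivial, l2_opNorm_conjTranspose] at h
  rw [← mul_pow]
  exact pow_le_pow_left₀ (norm_nonneg _) h 2

end Matrices

theorem hasDerivAt_mulVec_add_smul {ι κ : Type} [Fintype κ] (W A : Matrix ι κ ℝ) (r s : κ → ℝ) :
    HasDerivAt (fun t : ℝ => (W + t • A) *ᵥ (r + t • s)) (A *ᵥ r + W *ᵥ s) 0 := by
  rw [hasDerivAt_pi]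
  intro i
  simp only [mulVec, dotProduct, Matrix.add_apply, Matrix.smul_apply, Pi.add_apply,
    Pi.smul_apply, smul_eq_mul, ← Finset.sum_add_distrib]
  refine HasDerivAt.fun_sum fun j _ => ?_
  have hW := ((hasDerivAt_id (0 : ℝ)).mul_const (A i j)).const_add (W i j)
  have hr := ((hasDerivAt_id (0 : ℝ)).mul_const (s j)).const_add (r j)
  exact (hW.mul hr).congr_deriv (by simp only [id]; ring)

section ResidualNetwork

variable {m d k n : ℕ}

def resPred (f : Vec d → Vec k) (W : Matrix (Fin m) (Fin d) ℝ) (V : Matrix (Fin d) (Fin k) ℝ)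
    (x : Vec d) : Vec m :=
  (EuclideanSpace.equiv (Fin m) ℝ).symm (W *ᵥ (⇑x + V *ᵥ ⇑(f x)))

theorem pairWVm_add_smul (W A : Matrix (Fin m) (Fin d) ℝ) (V B : Matrix (Fin d) (Fin k) ℝ)
    (t : ℝ) : pairWVm W V + t • pairWVm A B = pairWVm (W + t • A) (V + t • B) := by
  ext (⟨a, j⟩ | ⟨j, l⟩) <;> simp [pairWVm]

theorem norm_pairWVm_sq (A : Matrix (Fin m) (Fin d) ℝ) (B : Matrix (Fin d) (Fin k) ℝ) :
    ‖pairWVm A B‖ ^ 2 = frobNorm A ^ 2 + frobNorm B ^ 2 := by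
  rw [EuclideanSpace.real_norm_sq_eq, Fintype.sum_sum_type, frobNorm_sq, frobNorm_sq,
    Fintype.sum_prod_type, Fintype.sum_prod_type]
  rfl

variable (ℓ : Vec m → Vec m → ℝ) (f : Vec d → Vec k) (x : Fin n → Vec d) (y : Fin n → Vec m)

theorem netObjVec_pairWVm (W : Matrix (Fin m) (Fin d) ℝ) (V : Matrix (Fin d) (Fin k) ℝ) :
    netObjVec ℓ f x y (pairWVm W V) = 1 / n * ∑ i, ℓ (resPred f W V (x i)) (y i) :=
  rfl

variable {ℓ}

theorem differentiable_netObjVec (hdiff : ∀ y₀ : Vec m, Differentiable ℝ fun p => ℓ p y₀) :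
    Differentiable ℝ (netObjVec ℓ f x y) := by
  unfold netObjVec
  fun_prop

theorem hasDerivAt_netObjVec_add_smul (hdiff : ∀ y₀ : Vec m, Differentiable ℝ fun p => ℓ p y₀)
    (W A : Matrix (Fin m) (Fin d) ℝ) (V B : Matrix (Fin d) (Fin k) ℝ) :
    HasDerivAt (fun t : ℝ => netObjVec ℓ f x y (pairWVm W V + t • pairWVm A B))
      (1 / n * ∑ i, fderiv ℝ (fun p => ℓ p (y i)) (resPred f W V (x i))
        ((EuclideanSpace.equiv (Fin m) ℝ).symm
          (A *ᵥ (⇑(x i) + V *ᵥ ⇑(f (x i))) + W *ᵥ (B *ᵥ ⇑(f (x i)))))) 0 := by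
  simp only [pairWVm_add_smul, netObjVec_pairWVm]
  refine (HasDerivAt.fun_sum fun i _ => ?_).const_mul _
  have hpred : HasDerivAt (fun t : ℝ => resPred f (W + t • A) (V + t • B) (x i))
      ((EuclideanSpace.equiv (Fin m) ℝ).symm
        (A *ᵥ (⇑(x i) + V *ᵥ ⇑(f (x i))) + W *ᵥ (B *ᵥ ⇑(f (x i))))) 0 := by
    have hline := hasDerivAt_mulVec_add_smul W A (⇑(x i) + V *ᵥ ⇑(f (x i))) (B *ᵥ ⇑(f (x i)))
    have hfun : (fun t : ℝ => resPred f (W + t • A) (V + t • B) (x i)) = fun t =>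
        (EuclideanSpace.equiv (Fin m) ℝ).symm
          ((W + t • A) *ᵥ (⇑(x i) + V *ᵥ ⇑(f (x i)) + t • (B *ᵥ ⇑(f (x i))))) := by
      funext t
      simp only [resPred, add_mulVec, smul_mulVec, add_assoc]
    rw [hfun]
    exact (EuclideanSpace.equiv (Fin m) ℝ).symm.hasFDerivAt.comp_hasDerivAt (0 : ℝ) hline
  have hℓ : HasFDerivAt (fun p => ℓ p (y i)) (fderiv ℝ (fun p => ℓ p (y i)) (resPred f W V (x i)))
      (resPred f (W + (0 : ℝ) • A) (V + (0 : ℝ) • B) (x i)) := by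
    simpa using (hdiff (y i) (resPred f W V (x i))).hasFDerivAt
  exact hℓ.comp_hasDerivAt (0 : ℝ) hpred

theorem hasDerivAt_netObjVec_add_smul_of_mul_eq
    (hdiff : ∀ y₀ : Vec m, Differentiable ℝ fun p => ℓ p y₀) {W U : Matrix (Fin m) (Fin d) ℝ}
    {V B : Matrix (Fin d) (Fin k) ℝ} (hWB : W * B = U * V) :
    HasDerivAt (fun t : ℝ => netObjVec ℓ f x y (pairWVm W V + t • pairWVm (W - U) B))
      (1 / n * ∑ i, fderiv ℝ (fun p => ℓ p (y i)) (resPred f W V (x i))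
        (resPred f W V (x i) - (EuclideanSpace.equiv (Fin m) ℝ).symm (U *ᵥ ⇑(x i)))) 0 := by
  convert hasDerivAt_netObjVec_add_smul f x y hdiff W (W - U) V B using 5 with i
  rw [resPred, ← map_sub, mulVec_mulVec, hWB, ← mulVec_mulVec, sub_mulVec, mulVec_add,
    mulVec_add]
  congr 1
  abel

theorem netObjVec_sub_linObjVec_le (hconv : ∀ y₀ : Vec m, ConvexOn ℝ Set.univ fun p => ℓ p y₀)
    (hdiff : ∀ y₀ : Vec m, Differentiable ℝ fun p => ℓ p y₀) (W U : Matrix (Fin m) (Fin d) ℝ)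
    (V : Matrix (Fin d) (Fin k) ℝ) :
    netObjVec ℓ f x y (pairWVm W V) - linObjVec ℓ x y U ≤
      1 / n * ∑ i, fderiv ℝ (fun p => ℓ p (y i)) (resPred f W V (x i))
        (resPred f W V (x i) - (EuclideanSpace.equiv (Fin m) ℝ).symm (U *ᵥ ⇑(x i))) := by
  rw [netObjVec_pairWVm, linObjVec, ← mul_sub, ← Finset.sum_sub_distrib]
  gcongr with i
  exact (hconv (y i)).sub_le_apply_sub_of_hasFDerivAt trivial trivial
    (hdiff (y i) _).hasFDerivAt

end ResidualNetwork

theorem norm_pairWVm_sub_le {m d k : ℕ} {W : Matrix (Fin m) (Fin d) ℝ} (hW : 0 < sMin W)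
    (U : Matrix (Fin m) (Fin d) ℝ) (V : Matrix (Fin d) (Fin k) ℝ) :
    ‖pairWVm (W - U) (Wᵀ * (W * Wᵀ)⁻¹ * (U * V))‖ ≤
      √(2 * frobNorm W ^ 2 + frobNorm U ^ 2 * (2 + matSpectralNorm V ^ 2 / sMin W ^ 2)) := by
  have hlam : 0 < lambdaMin (W * Wᵀ) := Real.sqrt_pos.mp hW
  have hB := frobNorm_mul_sq_le_of_norm_mulVec_sq_le
    (norm_sq_transpose_mul_inv_mulVec_le hlam) (U * V)
  have hUV := frobNorm_mul_sq_le U V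
  rw [← Real.sqrt_sq (norm_nonneg _), norm_pairWVm_sq, sMin, Real.sq_sqrt hlam.le]
  apply Real.sqrt_le_sqrt
  calc frobNorm (W - U) ^ 2 + frobNorm (Wᵀ * (W * Wᵀ)⁻¹ * (U * V)) ^ 2
      ≤ (2 * frobNorm W ^ 2 + 2 * frobNorm U ^ 2) +
          (lambdaMin (W * Wᵀ))⁻¹ * (matSpectralNorm V ^ 2 * frobNorm U ^ 2) :=
        add_le_add (frobNorm_sub_sq_le W U) (hB.trans (by gcongr))
    _ = 2 * frobNorm W ^ 2 +
          frobNorm U ^ 2 * (2 + matSpectralNorm V ^ 2 / lambdaMin (W * Wᵀ)) := by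
        ring

theorem norm_gradient_ge_suboptimality_vec_general
    {m d k n : ℕ} (ℓ : Vec m → Vec m → ℝ) (f : Vec d → Vec k)
    (x : Fin n → Vec d) (y : Fin n → Vec m)
    (hconv : ∀ y₀ : Vec m, ConvexOn ℝ Set.univ fun p => ℓ p y₀)
    (hdiff : ∀ y₀ : Vec m, Differentiable ℝ fun p => ℓ p y₀)
    (W : Matrix (Fin m) (Fin d) ℝ) (V : Matrix (Fin d) (Fin k) ℝ)
    (hsmin : 0 < sMin W)
    (U : Matrix (Fin m) (Fin d) ℝ) :
    ‖gradient (netObjVec ℓ f x y) (pairWVm W V)‖ ≥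
      (netObjVec ℓ f x y (pairWVm W V) - linObjVec ℓ x y U) /
        Real.sqrt (2 * frobNorm W ^ 2 +
          frobNorm U ^ 2 * (2 + matSpectralNorm V ^ 2 / sMin W ^ 2)) := by
  have hdet : IsUnit (W * Wᵀ).det := isUnit_det_of_lambdaMin_pos (Real.sqrt_pos.mp hsmin)
  have hWB : W * (Wᵀ * (W * Wᵀ)⁻¹ * (U * V)) = U * V := by
    rw [← Matrix.mul_assoc W, ← Matrix.mul_assoc W Wᵀ, mul_nonsing_inv _ hdet, Matrix.one_mul]
  have hgrad := le_norm_gradient_mul_norm_of_hasDerivAt (differentiable_netObjVec f x y hdiff _)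
    (hasDerivAt_netObjVec_add_smul_of_mul_eq f x y hdiff hWB)
  refine div_le_of_le_mul₀ (Real.sqrt_nonneg _) (norm_nonneg _) ?_
  calc _ ≤ _ := netObjVec_sub_linObjVec_le f x y hconv hdiff W U V
    _ ≤ _ := hgrad
    _ ≤ _ := by gcongr; exact norm_pairWVm_sub_le hsmin U V

/-- Theorem 6 of the paper: vector-output version of Theorem 1. -/
theorem norm_gradient_ge_suboptimality_vec
    {m d k n : ℕ} (ℓ : Vec m → Vec m → ℝ) (f : Vec d → Vec k)
    (x : Fin n → Vec d) (y : Fin n → Vec m)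
    (hconv : ∀ y₀ : Vec m, ConvexOn ℝ Set.univ fun p => ℓ p y₀)
    (hdiff : ∀ y₀ : Vec m, Differentiable ℝ fun p => ℓ p y₀)
    (W : Matrix (Fin m) (Fin d) ℝ) (V : Matrix (Fin d) (Fin k) ℝ)
    (hrank : W.rank = m) (hsmin : 0 < sMin W)
    (U : Matrix (Fin m) (Fin d) ℝ) :
    ‖gradient (netObjVec ℓ f x y) (pairWVm W V)‖ ≥
      (netObjVec ℓ f x y (pairWVm W V) - linObjVec ℓ x y U) /
        Real.sqrt (2 * frobNorm W ^ 2 +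
          frobNorm U ^ 2 * (2 + matSpectralNorm V ^ 2 / sMin W ^ 2)) :=
  norm_gradient_ge_suboptimality_vec_general ℓ f x y hconv hdiff W V hsmin U

end
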